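/- arXiv:1005.0781 — 3 statements merged into one kernel-verified Lean document; each statement's English description precedes it below -/
import Mathlib

section
/- The exponential generating function G(z) = Σ_{n≥0} b_n z^n / n! satisfies the q-th order differential equation (1-z) G^{(q)}(z) - q G^{(q-1)}(z) - (q-1) G(z) = q w^{(q)}(z), where w(z) = Σ_{i≥1} (-1)^i z^{qi}/(qi)!, with initial conditions G^{(i)}(0) = i! for i = 0,1,...,q-1. -/
open Finset

/-- `a` with `a+1`, ..., `a+q-1` (0-indexed) form an adjacent `q`-cycle of `π`. -/
def isAdjCycle (q : ℕ) {n : ℕ} (π : Equiv.Perm (Fin n)) (a : ℕ) : Prop :=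
  a + q ≤ n ∧ ∀ i : Fin n, a ≤ i.val → i.val < a + q →
    (π i).val = if i.val = a + q - 1 then a else i.val + 1

instance (q n : ℕ) (π : Equiv.Perm (Fin n)) (a : ℕ) : Decidable (isAdjCycle q π a) := by
  unfold isAdjCycle; infer_instance

/-- The number of adjacent `q`-cycles of a permutation of `{1,...,n}`. -/
def adjCycleCount (q : ℕ) {n : ℕ} (π : Equiv.Perm (Fin n)) : ℕ :=
  ((Finset.range n).filter (isAdjCycle q π)).card

/-- `numAqC q n k` = number of permutations of `{1,...,n}` with exactly `k` adjacent `q`-cycles. -/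
def numAqC (q n k : ℕ) : ℕ :=
  (Finset.univ.filter (fun π : Equiv.Perm (Fin n) => adjCycleCount q π = k)).card

def b (q n : ℕ) : ℕ := numAqC q n 0

/-!
Inclusion–exclusion over the set `S` of starting points of prescribed adjacent `q`-cycles: these
cycles can coexist only if their blocks `[a, a + q)` are disjoint and lie in `[0, n)`, and then
they are contained in exactly `(n - q|S|)!` permutations. A packing of `j` blocks is a word in
`n - qj` points and `j` blocks, so there are `C(n - (q-1)j, j)` of them, and
`b n = ∑ j, (-1)^j (n - (q-1)j)! / j!` (over `qj ≤ n`). Term by term this closed form satisfies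
`b (n + q) = (n + q) b (n + q - 1) + (q - 1) b n + [q ∣ n] q (-1)^(n/q + 1)`, the boundary term
`qj = n + q` producing the inhomogeneity; read coefficientwise on exponential generating functions
this recurrence is the differential equation. For `n < q` no adjacent `q`-cycle fits, so `b n = n!`.
-/

open Nat

theorem card_perm_eqOn_eq_factorial {α : Type*} [Fintype α] [DecidableEq α]
    (τ : Equiv.Perm α) (s : Finset α) :
    #{π : Equiv.Perm α | ∀ x ∈ s, π x = τ x} = (Fintype.card α - #s)! := by
  have e : {π : Equiv.Perm α // ∀ x ∈ s, π x = τ x} ≃ Equiv.Perm {x // x ∉ s} :=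
    ((Equiv.mulLeft τ⁻¹).subtypeEquiv fun π => by
      simp [Equiv.symm_apply_eq]).trans
      (Equiv.Perm.subtypeEquivSubtypePerm _).symm
  rw [← Fintype.card_subtype, Fintype.card_congr e, Fintype.card_perm,
    Fintype.card_subtype_compl, Fintype.card_coe]

lemma sum_range_ite_mul_eq {M : Type*} [AddCommMonoid M] {q n R : ℕ} (hq : 0 < q) (hR : n < R)
    (f : ℕ → M) :
    ∑ j ∈ range R, (if q * j = n then f j else 0) = if q ∣ n then f (n / q) else 0 := by
  split_ifs with h
  · obtain ⟨k, rfl⟩ := h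
    have : k ≤ q * k := Nat.le_mul_of_pos_left k hq
    simp only [Nat.mul_left_cancel_iff hq, Nat.mul_div_cancel_left k hq]
    rw [sum_ite_eq', if_pos (mem_range.2 (by omega))]
  · exact sum_eq_zero fun j _ => if_neg fun h' => h ⟨j, h'.symm⟩

section ExponentialGeneratingFunction

open PowerSeries

variable {K : Type*} [Field K]

def egf (f : ℕ → K) : K⟦X⟧ := PowerSeries.mk fun n => f n / n !

lemma coeff_egf (f : ℕ → K) (n : ℕ) : coeff n (egf f) = f n / n ! := coeff_mk _ _

lemma coeff_natCast_mul (c n : ℕ) (g : K⟦X⟧) : coeff n ((c : K⟦X⟧) * g) = c * coeff n g := by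
  rw [← map_natCast (C (R := K)) c, coeff_C_mul]

variable [CharZero K]

lemma derivative_egf (f : ℕ → K) : d⁄dX K (egf f) = egf fun n => f (n + 1) := by
  ext n
  rw [coeff_derivative, coeff_egf, coeff_egf, Nat.factorial_succ]
  push_cast
  field_simp

lemma iterate_derivative_egf (f : ℕ → K) (k : ℕ) :
    (d⁄dX K)^[k] (egf f) = egf fun n => f (n + k) := by
  induction k with
  | zero => rfl
  | succ k ih =>
    rw [Function.iterate_succ_apply', ih, derivative_egf]
    exact congrArg egf (funext fun n => congrArg f (by ring))

lemma coeff_X_mul_egf (f : ℕ → K) (n : ℕ) : coeff n (X * egf f) = n * f (n - 1) / n ! := by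
  rcases n with _ | n
  · simp
  · rw [coeff_succ_X_mul, coeff_egf, Nat.factorial_succ, Nat.add_sub_cancel]
    push_cast
    field_simp

end ExponentialGeneratingFunction

section BlockPacking

variable {q n : ℕ} {S : Finset ℕ}

def IsBlockPacking (q n : ℕ) (S : Finset ℕ) : Prop :=
  (∀ a ∈ S, a + q ≤ n) ∧ ∀ a ∈ S, ∀ c ∈ S, a < c → a + q ≤ c

instance (q n : ℕ) (S : Finset ℕ) : Decidable (IsBlockPacking q n S) := by
  unfold IsBlockPacking; infer_instance

def blockCover (q : ℕ) (S : Finset ℕ) : Finset ℕ := S.biUnion fun a => Ico a (a + q)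

lemma mem_blockCover {i : ℕ} : i ∈ blockCover q S ↔ ∃ a ∈ S, a ≤ i ∧ i < a + q := by
  simp [blockCover]

lemma IsBlockPacking.eq_of_mem_block (hS : IsBlockPacking q n S) {a c i : ℕ} (ha : a ∈ S)
    (hc : c ∈ S) (hai : a ≤ i) (hia : i < a + q) (hci : c ≤ i) (hic : i < c + q) : a = c := by
  rcases lt_trichotomy a c with h | h | h
  · have := hS.2 a ha c hc h; omega
  · exact h
  · have := hS.2 c hc a ha h; omega

lemma IsBlockPacking.card_blockCover (hS : IsBlockPacking q n S) :
    #(blockCover q S) = q * #S := by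
  rw [blockCover, card_biUnion]
  · simp [mul_comm]
  · intro a ha c hc hac
    rw [Function.onFun, disjoint_left]
    intro i hia hic
    rw [mem_Ico] at hia hic
    exact hac (hS.eq_of_mem_block ha hc hia.1 hia.2 hic.1 hic.2)

lemma IsBlockPacking.lt_of_mem_blockCover (hS : IsBlockPacking q n S) {i : ℕ}
    (hi : i ∈ blockCover q S) : i < n := by
  obtain ⟨a, ha, -, hia⟩ := mem_blockCover.1 hi
  have := hS.1 a ha
  omega

-- On each block `[a, a + q)` of `S` this is the cycle `a ↦ a + 1 ↦ ⋯ ↦ a + q - 1 ↦ a`; the last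
-- point `i` of a block is recognised by `i + 1 - q ∈ S`.
def blockRotate (q : ℕ) (S : Finset ℕ) (i : ℕ) : ℕ :=
  if q ≤ i + 1 ∧ i + 1 - q ∈ S then i + 1 - q else if i ∈ blockCover q S then i + 1 else i

def blockRotateInv (q : ℕ) (S : Finset ℕ) (i : ℕ) : ℕ :=
  if i ∈ S then i + q - 1 else if i ∈ blockCover q S then i - 1 else i

lemma IsBlockPacking.blockRotate_eq (hS : IsBlockPacking q n S) {a i : ℕ} (ha : a ∈ S)
    (hai : a ≤ i) (hia : i < a + q) :
    blockRotate q S i = if i = a + q - 1 then a else i + 1 := by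
  have hcov : i ∈ blockCover q S := mem_blockCover.2 ⟨a, ha, hai, hia⟩
  simp only [blockRotate, hcov, if_true]
  split_ifs with hend hlast
  · omega
  · have := hS.eq_of_mem_block hend.2 ha (by omega) (by omega) hai hia
    omega
  · exact absurd ⟨by omega, by rwa [show i + 1 - q = a by omega]⟩ hend
  · rfl

lemma blockRotate_of_notMem (hq : 0 < q) {i : ℕ} (hi : i ∉ blockCover q S) :
    blockRotate q S i = i := by
  have hend : ¬ (q ≤ i + 1 ∧ i + 1 - q ∈ S) := fun h =>
    hi (mem_blockCover.2 ⟨i + 1 - q, h.2, by omega, by omega⟩)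
  simp [blockRotate, hend, hi]

lemma IsBlockPacking.leftInverse_blockRotate (hq : 0 < q) (hS : IsBlockPacking q n S) :
    Function.LeftInverse (blockRotateInv q S) (blockRotate q S) := by
  intro i
  by_cases hi : i ∈ blockCover q S
  · obtain ⟨a, ha, hai, hia⟩ := mem_blockCover.1 hi
    rw [hS.blockRotate_eq ha hai hia]
    split_ifs with hlast
    · simp [blockRotateInv, ha]
      omega
    · have hnext : i + 1 ∉ S := fun h => by have := hS.2 a ha (i + 1) h (by omega); omega
      have hcov : i + 1 ∈ blockCover q S := mem_blockCover.2 ⟨a, ha, by omega, by omega⟩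
      simp [blockRotateInv, hnext, hcov]
  · have hiS : i ∉ S := fun h => hi (mem_blockCover.2 ⟨i, h, le_rfl, by omega⟩)
    simp [blockRotate_of_notMem hq hi, blockRotateInv, hiS, hi]

lemma IsBlockPacking.blockRotate_lt (hq : 0 < q) (hS : IsBlockPacking q n S) {i : ℕ}
    (hi : i < n) : blockRotate q S i < n := by
  by_cases hc : i ∈ blockCover q S
  · obtain ⟨a, ha, hai, hia⟩ := mem_blockCover.1 hc
    have := hS.1 a ha
    rw [hS.blockRotate_eq ha hai hia]
    split_ifs <;> omega
  · rwa [blockRotate_of_notMem hq hc]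

lemma IsBlockPacking.exists_perm_blockRotate (hq : 0 < q) (hS : IsBlockPacking q n S) :
    ∃ τ : Equiv.Perm (Fin n), ∀ i : Fin n, (τ i : ℕ) = blockRotate q S i := by
  let f : Fin n → Fin n := fun i => ⟨blockRotate q S i, hS.blockRotate_lt hq i.2⟩
  have hf : f.Injective := fun i j hij =>
    Fin.ext ((hS.leftInverse_blockRotate hq).injective (congrArg Fin.val hij))
  exact ⟨Equiv.ofBijective f hf.bijective_of_finite, fun _ => rfl⟩

lemma isBlockPacking_of_forall_isAdjCycle {π : Equiv.Perm (Fin n)}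
    (h : ∀ a ∈ S, isAdjCycle q π a) : IsBlockPacking q n S := by
  refine ⟨fun a ha => (h a ha).1, fun a ha c hc hac => ?_⟩
  by_contra hlt
  have hn := (h a ha).1
  -- `a + q - 1` lies in both cycles, which would send it to `a` and to `a + q`
  have h1 := (h a ha).2 ⟨a + q - 1, by omega⟩ (by simp; omega) (by simp; omega)
  have h2 := (h c hc).2 ⟨a + q - 1, by omega⟩ (by simp; omega) (by simp; omega)
  dsimp only at h1 h2
  rw [if_pos rfl] at h1
  rw [h1, if_neg (by omega)] at h2
  omega

lemma IsBlockPacking.card_perm_isAdjCycle (hq : 0 < q) (hS : IsBlockPacking q n S) :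
    #{π : Equiv.Perm (Fin n) | ∀ a ∈ S, isAdjCycle q π a} = (n - q * #S)! := by
  obtain ⟨τ, hτ⟩ := hS.exists_perm_blockRotate hq
  let C : Finset (Fin n) := (blockCover q S).attachFin fun _ => hS.lt_of_mem_blockCover
  have hC : ∀ π : Equiv.Perm (Fin n), (∀ a ∈ S, isAdjCycle q π a) ↔ ∀ x ∈ C, π x = τ x := by
    intro π
    constructor
    · intro h x hx
      obtain ⟨a, ha, hax, hxa⟩ := mem_blockCover.1 (mem_attachFin _ |>.1 hx)
      rw [Fin.ext_iff, (h a ha).2 x hax hxa, hτ, hS.blockRotate_eq ha hax hxa]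
    · refine fun h a ha => ⟨hS.1 a ha, fun i hai hia => ?_⟩
      rw [h i ((mem_attachFin _).2 (mem_blockCover.2 ⟨a, ha, hai, hia⟩)), hτ,
        hS.blockRotate_eq ha hai hia]
  have hcount := card_perm_eqOn_eq_factorial τ C
  rw [Fintype.card_fin, card_attachFin, hS.card_blockCover] at hcount
  rw [← hcount]
  congr 1
  ext π
  simp only [mem_filter, mem_univ, true_and, hC]

end BlockPacking

def blockPackings (q n : ℕ) : Finset (Finset ℕ) := {S ∈ (range n).powerset | IsBlockPacking q n S}

section BlockPackings

variable {q : ℕ} {S : Finset ℕ}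

lemma mem_blockPackings (hq : 0 < q) {n : ℕ} : S ∈ blockPackings q n ↔ IsBlockPacking q n S := by
  simp only [blockPackings, mem_filter, mem_powerset, and_iff_right_iff_imp]
  intro hS a ha
  have := hS.1 a ha
  exact mem_range.2 (by omega)

lemma b_eq_sum_blockPackings (hq : 0 < q) (n : ℕ) :
    (b q n : ℤ) = ∑ S ∈ blockPackings q n, (-1) ^ #S * ((n - q * #S)! : ℤ) := by
  let A : ℕ → Finset (Equiv.Perm (Fin n)) := fun a => {π | isAdjCycle q π a}
  have hb : b q n = #((range n).inf fun a => (A a)ᶜ) := by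
    rw [b, numAqC]
    congr 1
    ext π
    simp [A, mem_inf, adjCycleCount, filter_eq_empty_iff]
  rw [hb, inclusion_exclusion_card_inf_compl, blockPackings, sum_filter]
  refine sum_congr rfl fun S _ => ?_
  have hinf : S.inf A = ({π | ∀ a ∈ S, isAdjCycle q π a} : Finset (Equiv.Perm (Fin n))) := by
    ext π
    simp [A, mem_inf]
  rw [hinf]
  split_ifs with hS
  · rw [hS.card_perm_isAdjCycle hq]
  · rw [Finset.card_eq_zero.2 <|
      filter_eq_empty_iff.2 fun π _ h => hS (isBlockPacking_of_forall_isAdjCycle h)]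
    simp

lemma isBlockPacking_and_notMem_iff (hq : 0 < q) {m : ℕ} :
    IsBlockPacking q (m + q) S ∧ m ∉ S ↔ IsBlockPacking q (m + q - 1) S := by
  constructor
  · rintro ⟨⟨hle, hsep⟩, hm⟩
    refine ⟨fun a ha => ?_, hsep⟩
    have := hle a ha
    have : a ≠ m := fun h => hm (h ▸ ha)
    omega
  · rintro ⟨hle, hsep⟩
    exact ⟨⟨fun a ha => by have := hle a ha; omega, hsep⟩, fun hm => by have := hle m hm; omega⟩

lemma isBlockPacking_insert_iff {m : ℕ} (hm : m ∉ S) :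
    IsBlockPacking q (m + q) (insert m S) ↔ IsBlockPacking q m S := by
  constructor
  · rintro ⟨hle, hsep⟩
    have hlt : ∀ a ∈ S, a < m := fun a ha => by
      by_contra h
      have : a ≠ m := fun h' => hm (h' ▸ ha)
      have := hsep m (mem_insert_self m S) a (mem_insert_of_mem ha) (by omega)
      have := hle a (mem_insert_of_mem ha)
      omega
    exact ⟨fun a ha => hsep a (mem_insert_of_mem ha) m (mem_insert_self m S) (hlt a ha),
      fun a ha c hc => hsep a (mem_insert_of_mem ha) c (mem_insert_of_mem hc)⟩
  · rintro ⟨hle, hsep⟩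
    refine ⟨fun a ha => ?_, fun a ha c hc hac => ?_⟩
    · rcases mem_insert.1 ha with h | ha
      · omega
      · have := hle a ha; omega
    · rcases mem_insert.1 ha with h | ha <;> rcases mem_insert.1 hc with h' | hc
      · omega
      · have := hle c hc; omega
      · have := hle a ha; omega
      · exact hsep a ha c hc hac

lemma filter_blockPackings_add_of_notMem (hq : 0 < q) (m j : ℕ) :
    {S ∈ blockPackings q (m + q) | #S = j ∧ m ∉ S} = {S ∈ blockPackings q (m + q - 1) | #S = j} := by
  ext S
  simp only [mem_filter, mem_blockPackings hq, ← isBlockPacking_and_notMem_iff hq]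
  tauto

lemma card_blockPackings_add_of_mem (hq : 0 < q) (m j : ℕ) :
    #{S ∈ blockPackings q (m + q) | #S = j + 1 ∧ m ∈ S} = #{S ∈ blockPackings q m | #S = j} := by
  refine card_bij' (fun S _ => S.erase m) (fun T _ => insert m T) ?_ ?_ ?_ ?_
  · intro S hS
    simp only [mem_filter, mem_blockPackings hq] at hS ⊢
    obtain ⟨hP, hcard, hm⟩ := hS
    rw [← insert_erase hm, isBlockPacking_insert_iff (notMem_erase m S)] at hP
    exact ⟨hP, by rw [card_erase_of_mem hm, hcard, Nat.add_sub_cancel]⟩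
  · intro T hT
    simp only [mem_filter, mem_blockPackings hq] at hT ⊢
    have hm : m ∉ T := fun h => by have := hT.1.1 m h; omega
    exact ⟨(isBlockPacking_insert_iff hm).2 hT.1, by rw [card_insert_of_notMem hm, hT.2],
      mem_insert_self m T⟩
  · exact fun S hS => insert_erase (mem_filter.1 hS).2.2
  · intro T hT
    refine erase_insert fun h => ?_
    have := ((mem_blockPackings hq).1 (mem_filter.1 hT).1).1 m h
    omega

lemma choose_sub_sub_one_mul_succ (hq : 0 < q) (m j : ℕ) :
    (m + q - (q - 1) * (j + 1)).choose (j + 1) =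
      (m - (q - 1) * j).choose j + (m + q - 1 - (q - 1) * (j + 1)).choose (j + 1) := by
  rw [mul_add_one]
  by_cases h : (q - 1) * j ≤ m
  · rw [show m + q - ((q - 1) * j + (q - 1)) = (m - (q - 1) * j) + 1 by omega,
      show m + q - 1 - ((q - 1) * j + (q - 1)) = m - (q - 1) * j by omega, Nat.choose_succ_succ']
  · have hj : 0 < j := Nat.pos_of_ne_zero fun h0 => by simp [h0] at h
    rw [Nat.choose_eq_zero_of_lt (by omega), Nat.choose_eq_zero_of_lt (by omega),
      Nat.choose_eq_zero_of_lt (by omega)]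

lemma card_blockPackings (hq : 0 < q) (n j : ℕ) :
    #{S ∈ blockPackings q n | #S = j} = (n - (q - 1) * j).choose j := by
  induction n using Nat.strong_induction_on generalizing j with
  | _ n ih =>
  rcases j with _ | j
  · rw [show {S ∈ blockPackings q n | #S = 0} = {∅} from ?_, card_singleton, Nat.choose_zero_right]
    ext S
    simp only [mem_filter, Finset.card_eq_zero, mem_singleton]
    refine ⟨And.right, ?_⟩
    rintro rfl
    exact ⟨(mem_blockPackings hq).2 ⟨by simp, by simp⟩, rfl⟩
  rcases lt_or_ge n q with hn | hn
  · have : q - 1 ≤ (q - 1) * (j + 1) := Nat.le_mul_of_pos_right _ j.succ_pos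
    rw [Nat.choose_eq_zero_of_lt (by omega), Finset.card_eq_zero, filter_eq_empty_iff]
    intro S hS hcard
    obtain ⟨a, ha⟩ := card_pos.1 (show 0 < #S by omega)
    have := ((mem_blockPackings hq).1 hS).1 a ha
    omega
  obtain ⟨m, rfl⟩ := Nat.exists_eq_add_of_le' hn
  rw [← card_filter_add_card_filter_not (p := fun S => m ∈ S), filter_filter, filter_filter,
    card_blockPackings_add_of_mem hq, filter_blockPackings_add_of_notMem hq, ih m (by omega),
    ih (m + q - 1) (by omega), choose_sub_sub_one_mul_succ hq]

end BlockPackings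

def bTerm (q n j : ℕ) : ℚ := if q * j ≤ n then (-1) ^ j * (n - (q - 1) * j)! / j ! else 0

lemma bTerm_zero (q n : ℕ) : bTerm q n 0 = n ! := by
  simp [bTerm]

section ClosedForm

variable {q : ℕ}

lemma bTerm_eq_choose_mul_factorial (hq : 0 < q) (n j : ℕ) :
    bTerm q n j = (-1) ^ j * ((n - (q - 1) * j).choose j * (n - q * j)! : ℚ) := by
  have hj : j ≤ q * j := Nat.le_mul_of_pos_left j hq
  rw [bTerm, Nat.sub_one_mul]
  split_ifs with h
  · have hsplit : n - (q * j - j) = (n - q * j) + j := by omega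
    rw [hsplit, mul_div_assoc, ← Nat.add_choose_mul_factorial_mul_factorial (n - q * j) j]
    push_cast
    field_simp
  · have : 0 < j := Nat.pos_of_ne_zero fun h0 => by simp [h0] at h
    rw [Nat.choose_eq_zero_of_lt (n := n - (q * j - j)) (by omega)]
    simp

lemma b_eq_sum_bTerm (hq : 0 < q) (n : ℕ) : (b q n : ℚ) = ∑ j ∈ range (n + 1), bTerm q n j := by
  have h : (b q n : ℚ) = ∑ S ∈ blockPackings q n, (-1) ^ #S * ((n - q * #S)! : ℚ) := by
    exact_mod_cast b_eq_sum_blockPackings hq n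
  have hcard : ∀ S ∈ blockPackings q n, #S ∈ range (n + 1) := fun S hS => by
    have := card_le_card (mem_powerset.1 (mem_filter.1 hS).1)
    rw [card_range] at this
    exact mem_range.2 (by omega)
  rw [h, ← sum_fiberwise_of_maps_to hcard]
  refine sum_congr rfl fun j _ => ?_
  rw [sum_congr rfl fun S hS => by rw [(mem_filter.1 hS).2], sum_const, card_blockPackings hq,
    nsmul_eq_mul, bTerm_eq_choose_mul_factorial hq]
  ring

lemma sum_range_bTerm_of_le (hq : 0 < q) {n R : ℕ} (hR : n + 1 ≤ R) :
    ∑ j ∈ range (n + 1), bTerm q n j = ∑ j ∈ range R, bTerm q n j := by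
  refine sum_subset (range_subset_range.2 hR) fun j _ hj => ?_
  have : j ≤ q * j := Nat.le_mul_of_pos_left j hq
  simp only [mem_range, not_lt] at hj
  simp [bTerm, show ¬ q * j ≤ n by omega]

lemma bTerm_add_succ (hq : 0 < q) (n j : ℕ) :
    bTerm q (n + q) (j + 1) - (n + q) * bTerm q (n + q - 1) (j + 1) =
      ((q : ℚ) - 1) * bTerm q n j + if q * j = n then (q : ℚ) * (-1) ^ (j + 1) else 0 := by
  obtain ⟨p, rfl⟩ : ∃ p, q = p + 1 := ⟨q - 1, by omega⟩
  simp only [bTerm, Nat.add_sub_cancel, ← add_assoc]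
  push_cast
  rcases lt_trichotomy ((p + 1) * j) n with h | h | h
  · rw [if_pos (by nlinarith), if_pos (by nlinarith), if_pos h.le, if_neg h.ne,
      show n + p + 1 - p * (j + 1) = n - p * j + 1 by
        rw [Nat.mul_add_one]; have : p * j ≤ n := by nlinarith
        omega,
      show n + p - p * (j + 1) = n - p * j by rw [Nat.mul_add_one]; omega,
      Nat.factorial_succ, Nat.factorial_succ j]
    have : ((n - p * j : ℕ) : ℚ) = n - p * j := by
      rw [Nat.cast_sub (by nlinarith)]; push_cast; ring
    push_cast [this]
    field_simp
    ring
  · subst h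
    rw [if_pos (by ring_nf; omega), if_neg (by ring_nf; omega), if_pos le_rfl, if_pos rfl,
      show (p + 1) * j + p + 1 - p * (j + 1) = j + 1 by ring_nf; omega,
      show (p + 1) * j - p * j = j by ring_nf; omega]
    field_simp
    ring
  · rw [if_neg (by nlinarith), if_neg (by nlinarith), if_neg h.not_ge, if_neg h.ne']
    ring

theorem b_add (hq : 0 < q) (n : ℕ) :
    (b q (n + q) : ℚ) = (n + q) * b q (n + q - 1) + (q - 1) * b q n +
      if q ∣ n then (q : ℚ) * (-1) ^ (n / q + 1) else 0 := by
  have hfac : ((n + q)! : ℚ) - (n + q) * (n + q - 1)! = 0 := by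
    rw [sub_eq_zero]
    exact_mod_cast (Nat.mul_factorial_pred (by omega)).symm
  suffices (b q (n + q) : ℚ) - (n + q) * b q (n + q - 1) =
      (q - 1) * b q n + if q ∣ n then (q : ℚ) * (-1) ^ (n / q + 1) else 0 by linear_combination this
  calc (b q (n + q) : ℚ) - (n + q) * b q (n + q - 1)
      = ∑ j ∈ range (n + q + 1), (bTerm q (n + q) j - (n + q) * bTerm q (n + q - 1) j) := by
        rw [b_eq_sum_bTerm hq, b_eq_sum_bTerm hq,
          sum_range_bTerm_of_le hq (n := n + q - 1) (R := n + q + 1) (by omega), mul_sum,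
          sum_sub_distrib]
    _ = ∑ j ∈ range (n + q), (((q : ℚ) - 1) * bTerm q n j +
          if q * j = n then (q : ℚ) * (-1) ^ (j + 1) else 0) := by
        rw [sum_range_succ', bTerm_zero, bTerm_zero, hfac, add_zero]
        exact sum_congr rfl fun j _ => bTerm_add_succ hq n j
    _ = (q - 1) * b q n + if q ∣ n then (q : ℚ) * (-1) ^ (n / q + 1) else 0 := by
        rw [sum_add_distrib, ← mul_sum, ← sum_range_bTerm_of_le hq (by omega), ← b_eq_sum_bTerm hq,
          sum_range_ite_mul_eq hq (by omega) fun j => (q : ℚ) * (-1 : ℚ) ^ (j + 1)]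

end ClosedForm

lemma b_eq_factorial_of_lt {q n : ℕ} (h : n < q) : b q n = n ! := by
  rw [b, numAqC, filter_true_of_mem, Finset.card_univ, Fintype.card_perm, Fintype.card_fin]
  intro π _
  rw [adjCycleCount, Finset.card_eq_zero, filter_eq_empty_iff]
  exact fun a _ ha => by have := ha.1; omega

section DifferentialEquation

open PowerSeries

variable {q : ℕ}

lemma iterate_derivative_egf_ite_dvd (hq : 0 < q) :
    (d⁄dX ℚ)^[q] (egf fun n => if n ≠ 0 ∧ q ∣ n then (-1) ^ (n / q) else 0) =
      egf fun n => if q ∣ n then (-1) ^ (n / q + 1) else 0 := by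
  rw [iterate_derivative_egf]
  have hq0 : q ≠ 0 := by omega
  simp only [ne_eq, Nat.add_eq_zero_iff, hq0, and_false, not_false_eq_true, true_and,
    Nat.dvd_add_self_right, Nat.add_div_right _ hq]

theorem egf_b_differentialEquation (hq : 0 < q) :
    (1 - X) * (d⁄dX ℚ)^[q] (egf fun n => (b q n : ℚ)) -
        (q : ℚ⟦X⟧) * (d⁄dX ℚ)^[q - 1] (egf fun n => (b q n : ℚ)) -
        ((q : ℚ⟦X⟧) - 1) * egf (fun n => (b q n : ℚ)) =
      (q : ℚ⟦X⟧) * egf fun n => if q ∣ n then (-1) ^ (n / q + 1) else 0 := by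
  ext n
  rw [iterate_derivative_egf, iterate_derivative_egf]
  simp only [map_sub, sub_mul, one_mul, coeff_natCast_mul, coeff_X_mul_egf, coeff_egf]
  rw [← Nat.add_sub_assoc hq]
  have hrec := b_add hq n
  have hshift : (n : ℚ) * b q (n - 1 + q) = n * b q (n + q - 1) := by
    rcases n with _ | n
    · simp
    · rw [show n + 1 - 1 + q = n + 1 + q - 1 by omega]
  field_simp
  simp only [mul_ite, mul_zero]
  linear_combination hrec - hshift

end DifferentialEquation

open PowerSeries in
theorem stmt12 (q : ℕ) (hq : 1 ≤ q) :
    letI G : PowerSeries ℚ := PowerSeries.mk fun n => (b q n : ℚ) / (n.factorial : ℚ)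
    letI w : PowerSeries ℚ :=
      PowerSeries.mk fun n => if n ≠ 0 ∧ q ∣ n then (-1 : ℚ) ^ (n / q) / (n.factorial : ℚ) else 0
    ((1 - X) * ((⇑(PowerSeries.derivative ℚ))^[q] G) -
        (q : PowerSeries ℚ) * ((⇑(PowerSeries.derivative ℚ))^[q - 1] G) -
        ((q : PowerSeries ℚ) - 1) * G =
      (q : PowerSeries ℚ) * ((⇑(PowerSeries.derivative ℚ))^[q] w)) ∧
    ∀ i < q, PowerSeries.coeff (R := ℚ) 0 ((⇑(PowerSeries.derivative ℚ))^[i] G) = (i.factorial : ℚ) := by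
  have hG : (PowerSeries.mk fun n => (b q n : ℚ) / (n.factorial : ℚ)) = egf fun n => (b q n : ℚ) :=
    rfl
  have hw : (PowerSeries.mk fun n =>
      if n ≠ 0 ∧ q ∣ n then (-1 : ℚ) ^ (n / q) / (n.factorial : ℚ) else 0) =
      egf fun n => if n ≠ 0 ∧ q ∣ n then (-1) ^ (n / q) else 0 := by
    simp only [egf, ite_div, zero_div]
  refine ⟨?_, fun i hi => ?_⟩
  · rw [hG, hw, iterate_derivative_egf_ite_dvd hq]
    exact egf_b_differentialEquation hq
  · rw [hG, iterate_derivative_egf, coeff_egf, zero_add, b_eq_factorial_of_lt hi]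
    simp
end

section
/- Let 1 ≤ q_1 < q_2 < ... < q_m. The number of permutations of {1,...,n} having exactly k_j adjacent q_j-cycles for each j equals Σ (-1)^{Σ_j (k_j + t_j)} Π_j C(t_j, k_j) * (n - Σ_j (q_j - 1) t_j)! / Π_j t_j!, where the sum runs over all m-tuples (t_1,...,t_m) of nonnegative integers with Σ_j q_j t_j ≤ n. -/
open Finset

/-- number of permutations of `{1,...,n}` with exactly `k j` adjacent `Q j`-cycles for each `j`. -/
def numMulti {m : ℕ} (Q : Fin m → ℕ) (n : ℕ) (k : Fin m → ℕ) : ℕ :=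
  (Finset.univ.filter
    (fun π : Equiv.Perm (Fin n) => ∀ j, adjCycleCount (Q j) π = k j)).card

/-!
For a tuple `t`, the moment `∑ π, ∏ j, C(c_j(π), t j)`, where `c_j(π)` is the number of adjacent
`Q j`-cycles of `π`, counts permutations together with a choice of `t j` of their adjacent
`Q j`-cycles for each `j`. Adjacent cycles of one permutation occupy disjoint intervals, so such a
choice is a placement of disjoint blocks in `[0, n)`; conversely, a placement covering
`A = ∑ Q j t j` points is realised by exactly `(n - A)!` permutations. Reading `[0, n)` from left
to right, a placement is an arrangement of `t j` blocks of each kind and `n - A` free points, so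
there are `(n - A + ∑ t j)! / (∏ t j! (n - A)!)` of them. Binomial inversion
`∑ x, (-1)^(k + x) C(x, k) C(c, x) = [c = k]` in each coordinate turns the moments into the counts.
-/

open Equiv (Perm)

theorem card_perm_eqOn {α : Type*} [Fintype α] [DecidableEq α] (s : Finset α) (σ₀ : Perm α) :
    #{σ : Perm α | ∀ x ∈ s, σ x = σ₀ x} = (Fintype.card α - #s).factorial := by
  calc #{σ : Perm α | ∀ x ∈ s, σ x = σ₀ x} = #{τ : Perm α | ∀ x ∈ s, τ x = x} := by
        refine card_nbij' (σ₀⁻¹ * ·) (σ₀ * ·) ?_ ?_ ?_ ?_ <;> intro σ <;>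
          simp +contextual
    _ = Fintype.card {τ : Perm α // ∀ x, ¬x ∉ s → τ x = x} := by
        rw [Fintype.card_subtype]; simp
    _ = Fintype.card (Perm {x // x ∉ s}) :=
        (Fintype.card_congr (Perm.subtypeEquivSubtypePerm _)).symm
    _ = (Fintype.card α - #s).factorial := by
        rw [Fintype.card_perm, Fintype.card_subtype_compl, Fintype.card_coe]

def adjSucc (a q x : ℕ) : ℕ := if x = a + q - 1 then a else x + 1

theorem isAdjCycle_iff {q n a : ℕ} {π : Perm (Fin n)} :
    isAdjCycle q π a ↔
      a + q ≤ n ∧ ∀ x : Fin n, (x : ℕ) ∈ Ico a (a + q) → (π x : ℕ) = adjSucc a q x := by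
  simp only [isAdjCycle, adjSucc, mem_Ico, and_imp]

theorem adjSucc_mem_Ico {a q x : ℕ} (hx : x ∈ Ico a (a + q)) : adjSucc a q x ∈ Ico a (a + q) := by
  simp only [mem_Ico, adjSucc] at hx ⊢
  split <;> omega

theorem adjSucc_inj {a q x y : ℕ} (hx : x ∈ Ico a (a + q)) (hy : y ∈ Ico a (a + q))
    (h : adjSucc a q x = adjSucc a q y) : x = y := by
  simp only [mem_Ico, adjSucc] at hx hy h
  split at h <;> split at h <;> omega

theorem isAdjCycle_disjoint {n q q' a a' : ℕ} {π : Perm (Fin n)} (h : isAdjCycle q π a)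
    (h' : isAdjCycle q' π a') (hne : (a, q) ≠ (a', q')) :
    Disjoint (Ico a (a + q)) (Ico a' (a' + q')) := by
  wlog hle : a + q ≤ a' + q' generalizing a a' q q'
  · exact (this h' h hne.symm (by omega)).symm
  rw [disjoint_left]
  intro x hx hx'
  rw [mem_Ico] at hx hx'
  have hfit := (isAdjCycle_iff.1 h).1
  -- `a + q - 1` lies in both blocks and is sent back to `a`, so it also ends the second block
  let e : Fin n := ⟨a + q - 1, by omega⟩
  have h1 := (isAdjCycle_iff.1 h).2 e (mem_Ico.2 ⟨by simp [e]; omega, by simp [e]; omega⟩)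
  have h2 := (isAdjCycle_iff.1 h').2 e (mem_Ico.2 ⟨by simp [e]; omega, by simp [e]; omega⟩)
  simp only [adjSucc, e, if_true] at h1 h2
  rw [h1] at h2
  split_ifs at h2 <;> first | omega | exact hne (Prod.ext (by omega) (by omega))

section Blocks

variable {ι : Type*} {B : Finset ι} {a q : ι → ℕ} {n : ℕ}

-- The choice is harmless: for disjoint blocks at most one of them contains `x`.
noncomputable def blockSucc (B : Finset ι) (a q : ι → ℕ) (x : ℕ) : ℕ :=
  if h : ∃ i ∈ B, x ∈ Ico (a i) (a i + q i) then adjSucc (a h.choose) (q h.choose) x else x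

theorem blockSucc_of_mem {i : ι} {x : ℕ} (hi : i ∈ B) (hx : x ∈ Ico (a i) (a i + q i))
    (hB : (B : Set ι).PairwiseDisjoint fun i => Ico (a i) (a i + q i)) :
    blockSucc B a q x = adjSucc (a i) (q i) x := by
  have h : ∃ i ∈ B, x ∈ Ico (a i) (a i + q i) := ⟨i, hi, hx⟩
  rw [blockSucc, dif_pos h, hB.elim_finset h.choose_spec.1 hi x h.choose_spec.2 hx]

theorem blockSucc_of_forall_notMem {x : ℕ} (hx : ∀ i ∈ B, x ∉ Ico (a i) (a i + q i)) :
    blockSucc B a q x = x := by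
  rw [blockSucc, dif_neg (by simpa using hx)]

theorem blockSucc_lt (hfit : ∀ i ∈ B, a i + q i ≤ n) {x : ℕ} (hx : x < n) :
    blockSucc B a q x < n := by
  unfold blockSucc
  split_ifs with h
  · have hmem := adjSucc_mem_Ico h.choose_spec.2
    have := hfit _ h.choose_spec.1
    rw [mem_Ico] at hmem
    omega
  · exact hx

theorem blockSucc_injective (hB : (B : Set ι).PairwiseDisjoint fun i => Ico (a i) (a i + q i)) :
    Function.Injective (blockSucc B a q) := by
  intro x y hxy
  by_cases hx : ∃ i ∈ B, x ∈ Ico (a i) (a i + q i) <;>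
    by_cases hy : ∃ i ∈ B, y ∈ Ico (a i) (a i + q i)
  · obtain ⟨i, hi, hxi⟩ := hx
    obtain ⟨j, hj, hyj⟩ := hy
    rw [blockSucc_of_mem hi hxi hB, blockSucc_of_mem hj hyj hB] at hxy
    obtain rfl : i = j := hB.elim_finset hi hj _ (adjSucc_mem_Ico hxi) (hxy ▸ adjSucc_mem_Ico hyj)
    exact adjSucc_inj hxi hyj hxy
  · obtain ⟨i, hi, hxi⟩ := hx
    push Not at hy
    rw [blockSucc_of_mem hi hxi hB, blockSucc_of_forall_notMem hy] at hxy
    exact absurd (hxy ▸ adjSucc_mem_Ico hxi) (hy i hi)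
  · obtain ⟨j, hj, hyj⟩ := hy
    push Not at hx
    rw [blockSucc_of_mem hj hyj hB, blockSucc_of_forall_notMem hx] at hxy
    exact absurd (hxy ▸ adjSucc_mem_Ico hyj) (hx j hj)
  · push Not at hx hy
    rwa [blockSucc_of_forall_notMem hx, blockSucc_of_forall_notMem hy] at hxy

theorem exists_perm_isAdjCycle (hfit : ∀ i ∈ B, a i + q i ≤ n)
    (hB : (B : Set ι).PairwiseDisjoint fun i => Ico (a i) (a i + q i)) :
    ∃ σ : Perm (Fin n), ∀ i ∈ B, isAdjCycle (q i) σ (a i) := by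
  let g : Fin n → Fin n := fun x => ⟨blockSucc B a q x, blockSucc_lt hfit x.2⟩
  have hg : Function.Injective g := fun x y h =>
    Fin.ext (blockSucc_injective hB (congrArg Fin.val h))
  refine ⟨Equiv.ofBijective g (Finite.injective_iff_bijective.mp hg), fun i hi => ?_⟩
  exact isAdjCycle_iff.2 ⟨hfit i hi, fun x hx => blockSucc_of_mem hi hx hB⟩

theorem card_biUnion_Ico (hB : (B : Set ι).PairwiseDisjoint fun i => Ico (a i) (a i + q i)) :
    #(B.biUnion fun i => Ico (a i) (a i + q i)) = ∑ i ∈ B, q i := by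
  simp [card_biUnion hB]

theorem sum_le_of_pairwiseDisjoint (hfit : ∀ i ∈ B, a i + q i ≤ n)
    (hB : (B : Set ι).PairwiseDisjoint fun i => Ico (a i) (a i + q i)) :
    ∑ i ∈ B, q i ≤ n := by
  rw [← card_biUnion_Ico hB]
  refine (card_le_card fun x hx => ?_).trans (card_range n).le
  obtain ⟨i, hi, hx⟩ := mem_biUnion.1 hx
  have := hfit i hi
  rw [mem_Ico] at hx
  exact mem_range.2 (by omega)

theorem card_perm_isAdjCycle (hfit : ∀ i ∈ B, a i + q i ≤ n)
    (hB : (B : Set ι).PairwiseDisjoint fun i => Ico (a i) (a i + q i)) :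
    #{π : Perm (Fin n) | ∀ i ∈ B, isAdjCycle (q i) π (a i)} = (n - ∑ i ∈ B, q i).factorial := by
  obtain ⟨σ, hσ⟩ := exists_perm_isAdjCycle hfit hB
  let C : Finset (Fin n) := {x | ∃ i ∈ B, (x : ℕ) ∈ Ico (a i) (a i + q i)}
  have hC : #C = ∑ i ∈ B, q i := by
    rw [← card_biUnion_Ico hB, ← card_map Fin.valEmbedding]
    congr 1
    ext y
    simp only [C, mem_map, mem_filter, mem_univ, true_and, mem_biUnion, Fin.valEmbedding_apply]
    constructor
    · rintro ⟨x, hx, rfl⟩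
      exact hx
    · rintro ⟨i, hi, hy⟩
      have := hfit i hi
      rw [mem_Ico] at hy
      exact ⟨⟨y, by omega⟩, ⟨i, hi, by simpa using hy⟩, rfl⟩
  have hcontains : ∀ π : Perm (Fin n),
      (∀ i ∈ B, isAdjCycle (q i) π (a i)) ↔ ∀ x ∈ C, π x = σ x := by
    intro π
    simp only [isAdjCycle_iff, C, mem_filter, mem_univ, true_and]
    constructor
    · rintro h x ⟨i, hi, hx⟩
      exact Fin.ext (((h i hi).2 x hx).trans ((isAdjCycle_iff.1 (hσ i hi)).2 x hx).symm)
    · intro h i hi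
      exact ⟨hfit i hi, fun x hx => by rw [h x ⟨i, hi, hx⟩, (isAdjCycle_iff.1 (hσ i hi)).2 x hx]⟩
  rw [filter_congr fun π _ => hcontains π]
  convert card_perm_eqOn C σ using 3
  · exact (Fintype.card_fin n).symm
  · exact hC.symm

end Blocks

section Placements

variable {m n : ℕ} {Q : Fin m → ℕ} {t : Fin m → ℕ}

-- `S j` holds the starting points of the `t j` blocks of length `Q j`; `a < n + 1 - Q j` says
-- that the block `[a, a + Q j)` fits in `[0, n)`.
open Classical in
noncomputable def placements (Q : Fin m → ℕ) (n : ℕ) (t : Fin m → ℕ) : Finset (Fin m → Finset ℕ) :=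
  {S ∈ Fintype.piFinset fun j => (range (n + 1 - Q j)).powersetCard (t j) |
    (univ.sigma S : Set (Σ _ : Fin m, ℕ)).PairwiseDisjoint fun p => Ico p.2 (p.2 + Q p.1)}

theorem mem_placements {S : Fin m → Finset ℕ} :
    S ∈ placements Q n t ↔ (∀ j, ∀ a ∈ S j, a + Q j ≤ n) ∧ (∀ j, #(S j) = t j) ∧
      (univ.sigma S : Set (Σ _ : Fin m, ℕ)).PairwiseDisjoint fun p => Ico p.2 (p.2 + Q p.1) := by
  simp only [placements, mem_filter, Fintype.mem_piFinset, mem_powersetCard, subset_iff,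
    mem_range, Nat.lt_sub_iff_add_lt, Nat.lt_add_one_iff, forall_and, ← and_assoc]

theorem card_perm_isAdjCycle_of_mem_placements {S : Fin m → Finset ℕ}
    (hS : S ∈ placements Q n t) :
    #{π : Perm (Fin n) | ∀ j, ∀ a ∈ S j, isAdjCycle (Q j) π a} =
      (n - ∑ j, Q j * t j).factorial := by
  obtain ⟨hfit, hcard, hdisj⟩ := mem_placements.1 hS
  have h := card_perm_isAdjCycle (B := univ.sigma S) (a := Sigma.snd) (q := fun p => Q p.1)
    (fun p hp => hfit p.1 p.2 (mem_sigma.1 hp).2) hdisj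
  simpa only [sum_sigma, sum_const, hcard, smul_eq_mul, mul_comm, mem_sigma, mem_univ, true_and,
    Sigma.forall] using h

theorem mem_placements_of_isAdjCycle (hQ : Function.Injective Q) {S : Fin m → Finset ℕ}
    {π : Perm (Fin n)} (hS : ∀ j, ∀ a ∈ S j, isAdjCycle (Q j) π a)
    (hcard : ∀ j, #(S j) = t j) : S ∈ placements Q n t := by
  refine mem_placements.2 ⟨fun j a ha => (hS j a ha).1, hcard, ?_⟩
  rintro ⟨j, a⟩ hp ⟨j', a'⟩ hp' hne
  simp only [coe_sigma, Set.mem_sigma_iff, mem_coe, mem_univ, true_and] at hp hp'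
  refine isAdjCycle_disjoint (hS j a hp) (hS j' a' hp') fun h => hne ?_
  obtain ⟨rfl : a = a', hQj : Q j = Q j'⟩ := Prod.ext_iff.1 h
  rw [hQ hQj]

theorem sum_prod_choose_adjCycleCount (hQ : Function.Injective Q) (hQ1 : ∀ j, 1 ≤ Q j) :
    ∑ π : Perm (Fin n), ∏ j, (adjCycleCount (Q j) π).choose (t j) =
      #(placements Q n t) * (n - ∑ j, Q j * t j).factorial := by
  have hmem : ∀ (π : Perm (Fin n)) S, S ∈ Fintype.piFinset
      (fun j => {a ∈ range n | isAdjCycle (Q j) π a}.powersetCard (t j)) ↔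
      S ∈ placements Q n t ∧ ∀ j, ∀ a ∈ S j, isAdjCycle (Q j) π a := by
    intro π S
    simp only [Fintype.mem_piFinset, mem_powersetCard, subset_iff, mem_filter, mem_range,
      forall_and]
    constructor
    · rintro ⟨⟨-, hπ⟩, hcard⟩
      exact ⟨mem_placements_of_isAdjCycle hQ hπ hcard, hπ⟩
    · rintro ⟨hS, hπ⟩
      obtain ⟨hfit, hcard, -⟩ := mem_placements.1 hS
      exact ⟨⟨fun j a ha => by have := hfit j a ha; have := hQ1 j; omega, hπ⟩, hcard⟩
  calc ∑ π : Perm (Fin n), ∏ j, (adjCycleCount (Q j) π).choose (t j)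
      = ∑ π : Perm (Fin n), ∑ S ∈ Fintype.piFinset
          (fun j => {a ∈ range n | isAdjCycle (Q j) π a}.powersetCard (t j)), 1 := by
        simp [adjCycleCount, Fintype.card_piFinset]
    _ = ∑ S ∈ placements Q n t, ∑ π with ∀ j, ∀ a ∈ S j, isAdjCycle (Q j) π a, 1 :=
        sum_comm' fun π S => by simp [hmem, and_comm]
    _ = ∑ S ∈ placements Q n t, (n - ∑ j, Q j * t j).factorial := sum_congr rfl fun S hS => by
        rw [← card_eq_sum_ones, card_perm_isAdjCycle_of_mem_placements hS]
    _ = #(placements Q n t) * (n - ∑ j, Q j * t j).factorial := by rw [sum_const, smul_eq_mul]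

theorem placements_eq_empty (h : n < ∑ j, Q j * t j) : placements Q n t = ∅ := by
  refine eq_empty_of_forall_notMem fun S hS => h.not_ge ?_
  obtain ⟨hfit, hcard, hdisj⟩ := mem_placements.1 hS
  have := sum_le_of_pairwiseDisjoint (B := univ.sigma S) (a := Sigma.snd) (q := fun p => Q p.1)
    (fun p hp => hfit p.1 p.2 (mem_sigma.1 hp).2) hdisj
  simpa only [sum_sigma, sum_const, hcard, smul_eq_mul, mul_comm] using this

theorem placements_zero (n : ℕ) : placements Q n 0 = {fun _ => ∅} := by
  ext S
  simp only [mem_placements, Pi.zero_apply, card_eq_zero, mem_singleton]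
  constructor
  · rintro ⟨-, hS, -⟩
    exact funext hS
  · rintro rfl
    simp

end Placements

section Arithmetic

variable {m : ℕ}

theorem sum_mul_update_pred_add (f t : Fin m → ℕ) {j : Fin m} (htj : t j ≠ 0) :
    ∑ i, f i * Function.update t j (t j - 1) i + f j = ∑ i, f i * t i := by
  rw [← add_sum_erase _ _ (mem_univ j), ← add_sum_erase _ _ (mem_univ j),
    sum_congr rfl fun i hi => by rw [Function.update_of_ne (ne_of_mem_erase hi)],
    Function.update_self]
  obtain ⟨s, hs⟩ := Nat.exists_eq_add_one_of_ne_zero htj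
  rw [hs, Nat.add_sub_cancel]
  ring

theorem mul_prod_factorial_update_pred (t : Fin m → ℕ) {j : Fin m} (htj : t j ≠ 0) :
    t j * ∏ i, (Function.update t j (t j - 1) i).factorial = ∏ i, (t i).factorial := by
  rw [← mul_prod_erase _ _ (mem_univ j), ← mul_prod_erase _ _ (mem_univ j),
    prod_congr rfl fun i hi => by rw [Function.update_of_ne (ne_of_mem_erase hi)],
    Function.update_self, ← mul_assoc, Nat.mul_factorial_pred htj]

end Arithmetic

section Recurrence

variable {m : ℕ} {Q : Fin m → ℕ} {t : Fin m → ℕ}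

theorem filter_placements_succ_forall_notMem (n : ℕ) :
    {S ∈ placements Q (n + 1) t | ∀ j, n + 1 - Q j ∉ S j} = placements Q n t := by
  ext S
  simp only [mem_filter, mem_placements]
  constructor
  · rintro ⟨⟨hfit, hcard, hdisj⟩, hlast⟩
    refine ⟨fun j a ha => ?_, hcard, hdisj⟩
    have := hfit j a ha
    have : a ≠ n + 1 - Q j := fun h => hlast j (h ▸ ha)
    omega
  · rintro ⟨hfit, hcard, hdisj⟩
    refine ⟨⟨fun j a ha => (hfit j a ha).trans n.le_succ, hcard, hdisj⟩, fun j hj => ?_⟩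
    have := hfit j _ hj
    omega

theorem card_placements_succ (hQ1 : ∀ j, 1 ≤ Q j) (n : ℕ) :
    #(placements Q (n + 1) t) =
      #(placements Q n t) + ∑ j, #{S ∈ placements Q (n + 1) t | n + 1 - Q j ∈ S j} := by
  rw [← card_filter_add_card_filter_not (fun S => ∀ j, n + 1 - Q j ∉ S j),
    filter_placements_succ_forall_notMem]
  congr 1
  rw [← card_biUnion]
  · congr 1
    ext S
    simp
  -- two blocks ending at the last cell would overlap there
  intro j _ j' _ hne
  refine disjoint_left.2 fun S hS hS' => ?_
  simp only [mem_filter] at hS hS'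
  obtain ⟨hfit, -, hdisj⟩ := mem_placements.1 hS.1
  have := hfit j _ hS.2
  have := hfit j' _ hS'.2
  have := hQ1 j
  have := hQ1 j'
  have hd := hdisj (x := ⟨j, n + 1 - Q j⟩) (y := ⟨j', n + 1 - Q j'⟩) (by simpa using hS.2)
    (by simpa using hS'.2) (by simp [hne])
  exact disjoint_left.1 hd (show n ∈ Ico (n + 1 - Q j) (n + 1 - Q j + Q j) by simp; omega)
    (by simp; omega)

theorem coe_sigma_update_insert (S : Fin m → Finset ℕ) (j : Fin m) (c : ℕ) :
    (univ.sigma (Function.update S j (insert c (S j))) : Set (Σ _ : Fin m, ℕ)) =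
      insert ⟨j, c⟩ (univ.sigma S : Set (Σ _ : Fin m, ℕ)) := by
  ext ⟨i, a⟩
  by_cases hij : i = j
  · subst hij
    simp [eq_comm]
  · simp [hij]

theorem update_erase_mem_placements (hQ1 : ∀ j, 1 ≤ Q j) {N : ℕ} {j : Fin m}
    {S : Fin m → Finset ℕ} (hS : S ∈ placements Q N t) (hlast : N - Q j ∈ S j) :
    Function.update S j ((S j).erase (N - Q j)) ∈
      placements Q (N - Q j) (Function.update t j (t j - 1)) := by
  obtain ⟨hfit, hcard, hdisj⟩ := mem_placements.1 hS
  have hsub : univ.sigma (Function.update S j ((S j).erase (N - Q j))) ⊆ univ.sigma S :=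
    sigma_mono subset_rfl (update_le_self_iff.2 (erase_subset _ _))
  refine mem_placements.2 ⟨fun i a ha => ?_, fun i => ?_, hdisj.subset (mod_cast hsub)⟩
  · -- the block `[a, a + Q i)` misses the last block `[N - Q j, N)`, so it ends before it
    have hai : a ∈ S i := by
      simpa using hsub (show (⟨i, a⟩ : Σ _ : Fin m, ℕ) ∈ _ from mem_sigma.2 ⟨mem_univ i, ha⟩)
    have hne : (⟨i, a⟩ : Σ _ : Fin m, ℕ) ≠ ⟨j, N - Q j⟩ := by
      rintro ⟨⟩
      simp at ha
    have hd := hdisj (by simpa using hai) (by simpa using hlast) hne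
    have := hfit i a hai
    have := hQ1 i
    by_contra
    exact disjoint_left.1 hd (show a + Q i - 1 ∈ Ico a (a + Q i) by simp; omega)
      (by simp; omega)
  · by_cases hij : i = j
    · subst hij
      simp [card_erase_of_mem hlast, hcard]
    · simp [hij, hcard]

theorem update_insert_mem_placements (hQ1 : ∀ j, 1 ≤ Q j) {N : ℕ} {j : Fin m} (hQj : Q j ≤ N)
    (htj : t j ≠ 0) {T : Fin m → Finset ℕ}
    (hT : T ∈ placements Q (N - Q j) (Function.update t j (t j - 1))) :
    Function.update T j (insert (N - Q j) (T j)) ∈ placements Q N t := by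
  obtain ⟨hfit, hcard, hdisj⟩ := mem_placements.1 hT
  have hnotMem : N - Q j ∉ T j := fun h => by have := hfit j _ h; have := hQ1 j; omega
  refine mem_placements.2 ⟨fun i a ha => ?_, fun i => ?_, ?_⟩
  · by_cases hij : i = j
    · subst hij
      rcases mem_insert.1 (by simpa using ha) with rfl | ha
      · omega
      · have := hfit i a ha
        omega
    · have := hfit i a (by simpa [hij] using ha)
      omega
  · by_cases hij : i = j
    · subst hij
      simp [card_insert_of_notMem hnotMem, hcard]
      omega
    · simpa [hij] using hcard i
  · rw [coe_sigma_update_insert]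
    refine hdisj.insert fun p hp _ => disjoint_left.2 fun x hx hx' => ?_
    have := hfit p.1 p.2 (by simpa using hp)
    simp only [mem_Ico] at hx hx'
    omega

theorem card_filter_placements_mem (hQ1 : ∀ j, 1 ≤ Q j) {N : ℕ} {j : Fin m} (hQj : Q j ≤ N)
    (htj : t j ≠ 0) :
    #{S ∈ placements Q N t | N - Q j ∈ S j} =
      #(placements Q (N - Q j) (Function.update t j (t j - 1))) := by
  have hnotMem : ∀ T ∈ placements Q (N - Q j) (Function.update t j (t j - 1)), N - Q j ∉ T j :=
    fun T hT h => by have := (mem_placements.1 hT).1 j _ h; have := hQ1 j; omega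
  refine card_nbij' (fun S => Function.update S j ((S j).erase (N - Q j)))
    (fun T => Function.update T j (insert (N - Q j) (T j))) (fun S hS => ?_) (fun T hT => ?_)
    (fun S hS => ?_) (fun T hT => ?_)
  · simp only [coe_filter, Set.mem_ofPred_eq] at hS
    exact update_erase_mem_placements hQ1 hS.1 hS.2
  · simp only [coe_filter, Set.mem_ofPred_eq]
    exact ⟨update_insert_mem_placements hQ1 hQj htj hT, by simp⟩
  · simp only [coe_filter, Set.mem_ofPred_eq] at hS
    simp [insert_erase hS.2]
  · simp [erase_insert (hnotMem T hT)]

theorem card_filter_placements_succ_mem_mul (hQ1 : ∀ j, 1 ≤ Q j) {n r : ℕ} {j : Fin m}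
    (htj : t j ≠ 0) (hQj : Q j ≤ n + 1)
    (ih : #(placements Q (n + 1 - Q j) (Function.update t j (t j - 1))) *
      ((∏ i, (Function.update t j (t j - 1) i).factorial) * r.factorial) =
      (r + ∑ i, Function.update t j (t j - 1) i).factorial) :
    #{S ∈ placements Q (n + 1) t | n + 1 - Q j ∈ S j} * ((∏ i, (t i).factorial) * r.factorial) =
      t j * (r + ∑ i, t i - 1).factorial := by
  have hb' := sum_mul_update_pred_add (fun _ => 1) t htj
  simp only [one_mul] at hb'
  rw [card_filter_placements_mem hQ1 hQj htj, ← mul_prod_factorial_update_pred t htj,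
    show r + ∑ i, t i - 1 = r + ∑ i, Function.update t j (t j - 1) i by omega, ← ih]
  ring

theorem card_placements_mul_factorial (hQ1 : ∀ j, 1 ≤ Q j) (n : ℕ) (h : ∑ j, Q j * t j ≤ n) :
    #(placements Q n t) * ((∏ j, (t j).factorial) * (n - ∑ j, Q j * t j).factorial) =
      (n - ∑ j, Q j * t j + ∑ j, t j).factorial := by
  induction n using Nat.strong_induction_on generalizing t with
  | _ n ih =>
  rcases n with _ | n
  · obtain rfl : t = 0 := funext fun j => by
      have := (sum_eq_zero_iff.1 (Nat.le_zero.1 h)) j (mem_univ j)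
      exact (Nat.mul_eq_zero.1 this).resolve_left (by have := hQ1 j; omega)
    simp [placements_zero]
  set A := ∑ j, Q j * t j with hA
  set b := ∑ j, t j with hb
  set r := n + 1 - A with hr
  -- the last cell is free or ends a block: `(r + b)! = r (r + b - 1)! + ∑ j, t j (r + b - 1)!`
  have hfree : #(placements Q n t) * ((∏ j, (t j).factorial) * r.factorial) =
      r * (r + b - 1).factorial := by
    by_cases hAn : A ≤ n
    · have hfree := ih n n.lt_succ_self hAn
      rw [← hA, ← hb] at hfree
      rw [show r = n - A + 1 by omega, Nat.factorial_succ,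
        show n - A + 1 + b - 1 = n - A + b by omega, ← hfree]
      ring
    · rw [placements_eq_empty (by omega), card_empty, zero_mul, show r = 0 by omega, zero_mul]
  have hblock : ∀ j, #{S ∈ placements Q (n + 1) t | n + 1 - Q j ∈ S j} *
      ((∏ j, (t j).factorial) * r.factorial) = t j * (r + b - 1).factorial := by
    intro j
    by_cases htj : t j = 0
    · rw [filter_false_of_mem fun S hS hmem => by
        simp [card_eq_zero.1 (((mem_placements.1 hS).2.1 j).trans htj)] at hmem]
      simp [htj]
    have hA' := sum_mul_update_pred_add Q t htj
    have hih := ih (n + 1 - Q j) (by have := hQ1 j; omega) (t := Function.update t j (t j - 1))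
      (by omega)
    rw [show n + 1 - Q j - ∑ i, Q i * Function.update t j (t j - 1) i = r by omega] at hih
    exact card_filter_placements_succ_mem_mul hQ1 htj (by omega) hih
  have hpos : r + b ≠ 0 := by
    intro h0
    have hb0 : ∑ j, t j = 0 := by omega
    have : A = 0 := sum_eq_zero fun j _ => by rw [sum_eq_zero_iff.1 hb0 j (mem_univ j), mul_zero]
    omega
  rw [card_placements_succ hQ1, add_mul, sum_mul, hfree, sum_congr rfl fun j _ => hblock j,
    ← sum_mul, ← add_mul, Nat.mul_factorial_pred hpos]

end Recurrence

theorem alternating_sum_range_choose {R : Type*} [CommRing R] (n : ℕ) :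
    ∑ i ∈ range (n + 1), (-1 : R) ^ i * (n.choose i : R) = if n = 0 then 1 else 0 := by
  have := congrArg (Int.cast : ℤ → R) (Int.alternating_sum_range_choose (n := n))
  push_cast at this
  simpa [apply_ite (Int.cast : ℤ → R)] using this

theorem sum_neg_one_pow_mul_choose_mul_choose {R : Type*} [CommRing R] {N c : ℕ} (hc : c ≤ N)
    (k : ℕ) :
    ∑ x ∈ range (N + 1), (-1 : R) ^ (k + x) * (x.choose k : R) * (c.choose x : R) =
      if c = k then 1 else 0 := by
  have hvanish : ∀ x ∈ range (N + 1), x ∉ Ico k (c + 1) →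
      (-1 : R) ^ (k + x) * (x.choose k : R) * (c.choose x : R) = 0 := by
    intro x _ hx
    rcases lt_or_ge x k with hxk | hkx
    · simp [Nat.choose_eq_zero_of_lt hxk]
    · simp [Nat.choose_eq_zero_of_lt (show c < x by simp at hx; omega)]
  rw [← sum_subset (fun x hx => by simp only [mem_Ico, mem_range] at hx ⊢; omega) hvanish]
  rcases lt_or_ge c k with hck | hkc
  · rw [Ico_eq_empty (by omega), sum_empty, if_neg hck.ne]
  obtain ⟨d, rfl⟩ := Nat.exists_eq_add_of_le hkc
  have hterm : ∀ i ∈ range (d + 1), (-1 : R) ^ (k + (k + i)) * ((k + i).choose k : R) *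
      ((k + d).choose (k + i) : R) = ((k + d).choose k : R) * ((-1) ^ i * (d.choose i : R)) := by
    intro i _
    have h := Nat.choose_mul (n := k + d) (k := k + i) (s := k) (by omega)
    rw [Nat.add_sub_cancel_left, Nat.add_sub_cancel_left] at h
    have hR : ((k + d).choose (k + i) : R) * ((k + i).choose k : R) =
        ((k + d).choose k : R) * (d.choose i : R) := by rw [← Nat.cast_mul, ← Nat.cast_mul, h]
    rw [← add_assoc, ← two_mul, pow_add, pow_mul, neg_one_sq, one_pow, one_mul]
    linear_combination (-1 : R) ^ i * hR
  rw [sum_Ico_eq_sum_range, show k + d + 1 - k = d + 1 by omega, sum_congr rfl hterm, ← mul_sum,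
    alternating_sum_range_choose]
  by_cases hd : d = 0 <;> simp [hd]

theorem adjCycleCount_le {n : ℕ} (q : ℕ) (π : Perm (Fin n)) : adjCycleCount q π ≤ n :=
  (card_filter_le _ _).trans (card_range n).le

theorem numMulti_eq_sum_moments {R : Type*} [CommRing R] {m : ℕ} (Q : Fin m → ℕ) (n : ℕ)
    (k : Fin m → ℕ) :
    (numMulti Q n k : R) =
      ∑ t ∈ Fintype.piFinset fun _ : Fin m => range (n + 1),
        (-1 : R) ^ (∑ j, (k j + t j)) * (∏ j, ((t j).choose (k j)) : R) *
          ((∑ π : Perm (Fin n), ∏ j, (adjCycleCount (Q j) π).choose (t j) : ℕ) : R) := by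
  calc (numMulti Q n k : R)
      = ∑ π : Perm (Fin n), ∏ j, if adjCycleCount (Q j) π = k j then (1 : R) else 0 := by
        simp [numMulti, prod_boole, sum_boole]
    _ = ∑ π : Perm (Fin n), ∏ j, ∑ x ∈ range (n + 1),
          (-1 : R) ^ (k j + x) * (x.choose (k j) : R) * ((adjCycleCount (Q j) π).choose x : R) := by
        simp only [sum_neg_one_pow_mul_choose_mul_choose (adjCycleCount_le _ _)]
    _ = _ := by
        simp only [prod_univ_sum, Nat.cast_sum, Nat.cast_prod, mul_sum]
        rw [sum_comm]
        refine sum_congr rfl fun t _ => sum_congr rfl fun π _ => ?_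
        rw [prod_mul_distrib, prod_mul_distrib, prod_pow_eq_pow_sum]

theorem cast_sum_prod_choose_adjCycleCount {m n : ℕ} {Q : Fin m → ℕ}
    (hQ : Function.Injective Q) (hQ1 : ∀ j, 1 ≤ Q j) {t : Fin m → ℕ} (h : ∑ j, Q j * t j ≤ n) :
    ((∑ π : Perm (Fin n), ∏ j, (adjCycleCount (Q j) π).choose (t j) : ℕ) : ℚ) =
      ((n - ∑ j, (Q j - 1) * t j).factorial : ℚ) / ((∏ j, (t j).factorial : ℕ) : ℚ) := by
  have hcount := card_placements_mul_factorial hQ1 n h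
  have hsum : ∑ j, (Q j - 1) * t j + ∑ j, t j = ∑ j, Q j * t j := by
    rw [← sum_add_distrib]
    exact sum_congr rfl fun j _ => by
      rw [Nat.sub_mul, one_mul, Nat.sub_add_cancel (Nat.le_mul_of_pos_left (t j) (hQ1 j))]
  rw [eq_div_iff (by positivity), sum_prod_choose_adjCycleCount hQ hQ1,
    show n - ∑ j, (Q j - 1) * t j = n - ∑ j, Q j * t j + ∑ j, t j by omega, ← hcount]
  push_cast
  ring

theorem stmt14_general (m n : ℕ) (Q : Fin m → ℕ) (hQ : StrictMono Q) (hQ1 : ∀ j, 1 ≤ Q j)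
    (k : Fin m → ℕ) :
    (numMulti Q n k : ℚ) =
      ∑ t ∈ (Fintype.piFinset fun _ : Fin m => Finset.range (n + 1)).filter
          (fun t => ∑ j, Q j * t j ≤ n),
        (-1 : ℚ) ^ (∑ j, (k j + t j)) * (∏ j, ((t j).choose (k j)) : ℚ) *
          ((n - ∑ j, (Q j - 1) * t j).factorial : ℚ) / ((∏ j, (t j).factorial : ℕ) : ℚ) := by
  rw [numMulti_eq_sum_moments, ← sum_filter_of_ne (p := fun t => ∑ j, Q j * t j ≤ n)]
  · refine sum_congr rfl fun t ht => ?_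
    rw [cast_sum_prod_choose_adjCycleCount hQ.injective hQ1 (mem_filter.1 ht).2, mul_div_assoc]
  · intro t _ ht
    by_contra h
    rw [sum_prod_choose_adjCycleCount hQ.injective hQ1, placements_eq_empty (not_le.1 h)] at ht
    simp at ht

theorem stmt14 (m n : ℕ) (Q : Fin m → ℕ) (hQ : StrictMono Q) (hQ1 : ∀ j, 1 ≤ Q j)
    (hn : 1 ≤ n) (k : Fin m → ℕ) :
    (numMulti Q n k : ℚ) =
      ∑ t ∈ (Fintype.piFinset fun _ : Fin m => Finset.range (n + 1)).filter
          (fun t => ∑ j, Q j * t j ≤ n),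
        (-1 : ℚ) ^ (∑ j, (k j + t j)) * (∏ j, ((t j).choose (k j)) : ℚ) *
          ((n - ∑ j, (Q j - 1) * t j).factorial : ℚ) / ((∏ j, (t j).factorial : ℕ) : ℚ) :=
  stmt14_general m n Q hQ hQ1 k
end

section
/- Let n, p, q, r be nonnegative integers with p, q, r ≤ n, and let α, β, γ be nonnegative integers with pα + qβ + rγ ≤ n. Then Σ (-1)^{s+t+u} C(s,i)C(α,s) C(t,j)C(β,t) C(u,k)C(γ,u), summed over all nonnegative (s,t,u) with ps + qt + ru ≤ n, equals (-1)^{i+j+k} if (α,β,γ) = (i,j,k), and 0 otherwise. -/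
/-! The condition `p s + q t + r u ≤ n` only cuts off terms with `s > α`, `t > β` or `u > γ`,
which vanish anyway because of the factors `C(α,s) C(β,t) C(γ,u)`. Dropping it, the triple sum
factors into three one-variable sums `∑ₛ (-1)^s C(s,i) C(α,s)`.
Since `C(α,s) C(s,i) = C(α,i) C(α-i,s-i)`, each of these is `(-1)^i C(α,i)` times the
alternating sum of the row `α - i` of Pascal's triangle, which is `1` if `α = i` and `0` otherwise. -/

open Finset

theorem alternating_sum_range_choose_mul_choose (n i : ℕ) :
    ∑ s ∈ range (n + 1), (-1 : ℤ) ^ s * s.choose i * n.choose s =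
      if n = i then (-1) ^ i else 0 := by
  obtain hni | hin := lt_or_ge n i
  · rw [if_neg hni.ne]
    refine sum_eq_zero fun s hs => ?_
    rw [Nat.choose_eq_zero_of_lt (by grind : s < i)]
    simp
  obtain ⟨m, rfl⟩ := Nat.exists_eq_add_of_le hin
  have hshift : ∀ x, (-1 : ℤ) ^ (i + x) * (i + x).choose i * (i + m).choose (i + x) =
      (-1) ^ i * (i + m).choose i * ((-1) ^ x * m.choose x) := by
    intro x
    have h := Nat.choose_mul (n := i + m) (Nat.le_add_right i x)
    simp only [Nat.add_sub_cancel_left] at h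
    have hc : ((i + m).choose (i + x) * (i + x).choose i : ℤ) =
        (i + m).choose i * m.choose x := by
      exact_mod_cast h
    rw [pow_add]
    linear_combination (-1 : ℤ) ^ i * (-1) ^ x * hc
  rw [show i + m + 1 = i + (m + 1) by ring, sum_range_add,
    sum_eq_zero fun s hs => by rw [Nat.choose_eq_zero_of_lt (mem_range.mp hs)]; simp,
    zero_add, sum_congr rfl fun x _ => hshift x, ← mul_sum, Int.alternating_sum_range_choose]
  by_cases hm : m = 0 <;> simp [hm]

theorem alternating_finsum_choose_mul_choose (n i : ℕ) :
    ∑ᶠ s, (-1 : ℤ) ^ s * s.choose i * n.choose s = if n = i then (-1) ^ i else 0 := by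
  rw [finsum_eq_sum_of_support_subset _ (s := range (n + 1)),
    alternating_sum_range_choose_mul_choose]
  intro s hs
  contrapose hs
  simp_all [Nat.choose_eq_zero_of_lt]

theorem finsum_finsum_finsum_mul_mul {ι₁ ι₂ ι₃ R : Type*} [NonUnitalSemiring R]
    [NoZeroDivisors R] (f : ι₁ → R) (g : ι₂ → R) (h : ι₃ → R) :
    ∑ᶠ (a) (b) (c), f a * g b * h c = (∑ᶠ a, f a) * (∑ᶠ b, g b) * ∑ᶠ c, h c := by
  simp only [← mul_finsum, ← finsum_mul]

theorem stmt16_general (n p q r i j k α β γ : ℕ) (h : p * α + q * β + r * γ ≤ n) :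
    (∑ᶠ (s : ℕ) (t : ℕ) (u : ℕ),
        if p * s + q * t + r * u ≤ n then
          (-1 : ℤ) ^ (s + t + u) * (s.choose i) * (α.choose s) * (t.choose j) *
            (β.choose t) * (u.choose k) * (γ.choose u)
        else 0) =
      if (α, β, γ) = (i, j, k) then (-1 : ℤ) ^ (i + j + k) else 0 := by
  have hsplit : ∀ s t u, (if p * s + q * t + r * u ≤ n then
        (-1 : ℤ) ^ (s + t + u) * (s.choose i) * (α.choose s) * (t.choose j) *
          (β.choose t) * (u.choose k) * (γ.choose u)
      else 0) = (-1 : ℤ) ^ s * s.choose i * α.choose s *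
        ((-1) ^ t * t.choose j * β.choose t) * ((-1) ^ u * u.choose k * γ.choose u) := by
    intro s t u
    split_ifs with hle
    · rw [pow_add, pow_add]
      ring
    · have hout : α < s ∨ β < t ∨ γ < u := by
        by_contra! hin
        exact hle (h.trans' (by gcongr <;> grind))
      rcases hout with hs | ht | hu <;> simp [Nat.choose_eq_zero_of_lt, *]
  simp only [hsplit, finsum_finsum_finsum_mul_mul, alternating_finsum_choose_mul_choose]
  by_cases hi : α = i <;> by_cases hj : β = j <;> by_cases hk : γ = k <;>
    simp [hi, hj, hk, pow_add]

theorem stmt16 (n p q r i j k α β γ : ℕ) (hp : p ≤ n) (hq : q ≤ n) (hr : r ≤ n)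
    (h : p * α + q * β + r * γ ≤ n) :
    (∑ᶠ (s : ℕ) (t : ℕ) (u : ℕ),
        if p * s + q * t + r * u ≤ n then
          (-1 : ℤ) ^ (s + t + u) * (s.choose i) * (α.choose s) * (t.choose j) *
            (β.choose t) * (u.choose k) * (γ.choose u)
        else 0) =
      if (α, β, γ) = (i, j, k) then (-1 : ℤ) ^ (i + j + k) else 0 :=
  stmt16_general n p q r i j k α β γ h
end
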